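/- Let m be a meeting function, k > 0, μ an absolutely continuous Borel probability measure on [0,1], and σ a market segmentation for μ with induced measure σ_μ. Then for every nonnegative σ_μ-integrable function τ with k ∫ τ dσ_μ = 1 there exists a nonnegative μ-integrable function τ̃ with k ∫ τ̃ dμ = 1 such that k ∫ m(τ(ν)) E_ν[θ] dσ_μ(ν) ≤ k ∫ m(τ̃(θ)) θ dμ(θ). Consequently, the perfect segmentation (which sends each θ to the Dirac measure δ_θ) attains the maximal total surplus among all market segmentations paired with feasible tightness functions. -/

import Mathlib

open MeasureTheory Set Filter Topology ProbabilityTheory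

noncomputable section

/-- The type space `Θ = [0,1]` of seller types. -/
abbrev Θ : Type := Set.Icc (0:ℝ) 1

/-- The space of Borel probability measures on `[0,1]`, with the weak topology. -/
abbrev PM : Type := MeasureTheory.ProbabilityMeasure Θ

/-- Borel σ-algebra on the space of probability measures on `[0,1]`. -/
instance : MeasurableSpace PM := borel PM

instance : BorelSpace PM := ⟨rfl⟩

example : CompactSpace Θ := inferInstance
example : HasOuterApproxClosed Θ := inferInstance
example : T2Space PM := inferInstance
example : MeasurableSingletonClass Θ := inferInstance

lemma lsc_eval {G : Set Θ} (hG : IsOpen G) :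
    LowerSemicontinuous (fun ν : PM => (ν : Measure Θ) G) := by
  intro ν
  refine lowerSemicontinuousAt_iff_le_liminf.mpr ?_
  exact ProbabilityMeasure.le_liminf_measure_open_of_tendsto tendsto_id hG

lemma measurable_eval {A : Set Θ} (hA : MeasurableSet A) :
    Measurable (fun ν : PM => (ν : Measure Θ) A) := by
  refine MeasurableSet.induction_on_open
    (C := fun A _ => Measurable fun ν : PM => (ν : Measure Θ) A)
    (fun U hU => (lsc_eval hU).measurable) ?_ ?_ A hA
  · intro t ht iht
    have : (fun ν : PM => (ν : Measure Θ) tᶜ) = fun ν : PM => 1 - (ν : Measure Θ) t := by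
      funext ν
      rw [measure_compl ht (measure_ne_top _ _), measure_univ]
    rw [this]
    exact measurable_const.sub iht
  · intro f hdisj hmeas ihf
    have : (fun ν : PM => (ν : Measure Θ) (⋃ i, f i)) =
        fun ν : PM => ∑' i, (ν : Measure Θ) (f i) := by
      funext ν; exact measure_iUnion hdisj hmeas
    rw [this]
    exact Measurable.ennreal_tsum ihf

lemma measurable_toMeasure : Measurable (fun ν : PM => (ν : Measure Θ)) :=
  Measure.measurable_of_measurable_coe _ fun _A hA => measurable_eval hA

def κν : Kernel PM Θ := ⟨fun ν => (ν : Measure Θ), measurable_toMeasure⟩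

instance : IsMarkovKernel κν := ⟨fun ν => ν.2⟩


/-- Expected seller type of a submarket `ν`: `E_ν[θ]`. -/
def Eθ (ν : PM) : ℝ := ∫ θ, (θ : ℝ) ∂(ν : Measure Θ)

/-- A meeting function: `m 0 = 0`, `m t ≤ min 1 t`, twice differentiable, strictly increasing
and strictly concave, with `β = lim_{t→0+} m t / t ∈ (0,1]` and `α = lim_{t→∞} m t ∈ (0,1]`. -/
structure MeetingFunction where
  m : ℝ → ℝ
  β : ℝ
  α : ℝ
  m_zero : m 0 = 0
  m_le : ∀ t ≥ (0:ℝ), m t ≤ min 1 t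
  diff1 : ∀ t > (0:ℝ), DifferentiableAt ℝ m t
  diff2 : ∀ t > (0:ℝ), DifferentiableAt ℝ (deriv m) t
  mono : StrictMonoOn m (Ici 0)
  concave : StrictConcaveOn ℝ (Ici 0) m
  β_mem : β ∈ Ioc (0:ℝ) 1
  α_mem : α ∈ Ioc (0:ℝ) 1
  β_lim : Tendsto (fun t => m t / t) (nhdsWithin 0 (Ioi 0)) (nhds β)
  α_lim : Tendsto m atTop (nhds α)

/-- The measure `σ_μ` over submarkets induced by a market segmentation `σ` and prior `μ`. -/
def segMeasure (μ : Measure Θ) (σ : Kernel Θ PM) : Measure PM :=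
  μ.bind (fun θ => σ θ)

/-- Bayes consistency of a segmentation: for all Borel `A ⊆ Θ` and Borel `B` of submarkets,
`∫_A σ(B,θ) dμ(θ) = ∫_B ν(A) dσ_μ(ν)`. -/
def BayesConsistent (μ : Measure Θ) (σ : Kernel Θ PM) : Prop :=
  ∀ A : Set Θ, MeasurableSet A → ∀ B : Set PM, MeasurableSet B →
    ∫ θ in A, ((σ θ) B).toReal ∂μ = ∫ ν in B, ((ν : Measure Θ) A).toReal ∂(segMeasure μ σ)

/-- The set of market segmentations for a prior `μ`. -/
def Seg (μ : Measure Θ) : Set (Kernel Θ PM) :=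
  {σ | IsMarkovKernel σ ∧ BayesConsistent μ σ}

open BoundedContinuousFunction in
def coeBCF : BoundedContinuousFunction Θ ℝ := BoundedContinuousFunction.mkOfCompact ⟨fun θ : Θ => (θ:ℝ), continuous_subtype_val⟩

lemma continuous_Eθ : Continuous Eθ :=
  MeasureTheory.ProbabilityMeasure.continuous_integral_boundedContinuousFunction coeBCF

namespace MeetingFunction
variable (M : MeetingFunction)

lemma m_nonneg {t : ℝ} (ht : 0 ≤ t) : 0 ≤ M.m t := by
  rcases eq_or_lt_of_le ht with h | h
  · rw [← h, M.m_zero]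
  · have := M.mono (self_mem_Ici) (le_of_lt h : (0:ℝ) ≤ t) h
    rw [M.m_zero] at this; exact this.le

lemma m_le_one {t : ℝ} (ht : 0 ≤ t) : M.m t ≤ 1 := (M.m_le t ht).trans (min_le_left _ _)

lemma m_le_self {t : ℝ} (ht : 0 ≤ t) : M.m t ≤ t := (M.m_le t ht).trans (min_le_right _ _)

lemma m_contOn : ContinuousOn M.m (Ici 0) := by
  intro t ht
  rcases eq_or_lt_of_le (mem_Ici.mp ht : (0:ℝ) ≤ t) with h | h
  · subst h
    have h1 : Tendsto M.m (nhdsWithin 0 (Ioi 0)) (nhds 0) := by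
      have h2 : Tendsto (fun t => M.m t / t * t) (nhdsWithin 0 (Ioi 0)) (nhds (M.β * 0)) :=
        M.β_lim.mul (tendsto_id.mono_left nhdsWithin_le_nhds)
      rw [mul_zero] at h2
      refine h2.congr' ?_
      filter_upwards [self_mem_nhdsWithin] with x hx
      exact div_mul_cancel₀ _ (ne_of_gt hx)
    have : ContinuousWithinAt M.m (Ici 0) 0 := by
      unfold ContinuousWithinAt
      rw [M.m_zero, show Ici (0:ℝ) = {0} ∪ Ioi 0 by
        ext x; simp [le_iff_lt_or_eq, eq_comm, or_comm],
        nhdsWithin_union, nhdsWithin_singleton]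
      rw [tendsto_sup]
      exact ⟨by simpa [M.m_zero] using tendsto_pure_nhds M.m 0, h1⟩
    exact this
  · exact ((M.diff1 t h).continuousAt).continuousWithinAt

lemma m_concaveOn : ConcaveOn ℝ (Ici 0) M.m := M.concave.concaveOn

end MeetingFunction

section Core
variable (μ : Measure Θ) [IsProbabilityMeasure μ] (σ : Kernel Θ PM) [IsMarkovKernel σ]

lemma segMeasure_apply {B : Set PM} (hB : MeasurableSet B) :
    segMeasure μ σ B = ∫⁻ θ, σ θ B ∂μ := by
  rw [segMeasure, Measure.bind_apply hB σ.measurable.aemeasurable]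

lemma segMeasure_eq_snd : segMeasure μ σ = (μ ⊗ₘ σ).snd := by
  ext B hB
  rw [segMeasure_apply μ σ hB, Measure.snd_apply hB,
    Measure.compProd_apply (measurable_snd hB)]
  rfl

instance : IsProbabilityMeasure (segMeasure μ σ) := by
  constructor
  rw [segMeasure_apply μ σ MeasurableSet.univ]
  simp

lemma swap_push (hBC : BayesConsistent μ σ) :
    (μ ⊗ₘ σ).map Prod.swap = (segMeasure μ σ) ⊗ₘ κν := by
  have h1 : IsProbabilityMeasure ((μ ⊗ₘ σ).map Prod.swap) :=
    Measure.isProbabilityMeasure_map measurable_swap.aemeasurable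
  have h2 : IsProbabilityMeasure ((segMeasure μ σ) ⊗ₘ κν) := by infer_instance
  refine MeasureTheory.ext_of_generate_finite _ generateFrom_prod.symm isPiSystem_prod ?_ (by simp)
  rintro - ⟨B, hB, A, hA, rfl⟩
  simp only [Set.mem_setOf_eq] at hA hB
  rw [Measure.map_apply measurable_swap ((hB : MeasurableSet B).prod hA),
    preimage_swap_prod, Measure.compProd_apply_prod hA hB,
    Measure.compProd_apply_prod hB hA]
  have key := hBC A hA B hB
  have e1 : ∫ θ in A, ((σ θ) B).toReal ∂μ = (∫⁻ θ in A, σ θ B ∂μ).toReal := by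
    rw [integral_toReal ((σ.measurable_coe hB).aemeasurable.restrict)]
    exact Eventually.of_forall fun θ => measure_lt_top _ _
  have e2 : ∫ ν in B, ((ν : Measure Θ) A).toReal ∂(segMeasure μ σ) =
      (∫⁻ ν in B, (ν : Measure Θ) A ∂(segMeasure μ σ)).toReal := by
    rw [integral_toReal ((measurable_eval hA).aemeasurable.restrict)]
    exact Eventually.of_forall fun ν => measure_lt_top _ _
  rw [e1, e2] at key
  have f1 : ∫⁻ θ in A, σ θ B ∂μ ≠ ⊤ := by
    refine ne_top_of_le_ne_top ENNReal.one_ne_top ?_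
    calc ∫⁻ θ in A, σ θ B ∂μ ≤ ∫⁻ _ in A, 1 ∂μ := lintegral_mono fun θ => prob_le_one
      _ = μ A := by simp
      _ ≤ 1 := prob_le_one
  have f2 : ∫⁻ ν in B, (ν : Measure Θ) A ∂(segMeasure μ σ) ≠ ⊤ := by
    refine ne_top_of_le_ne_top ENNReal.one_ne_top ?_
    calc ∫⁻ ν in B, (ν : Measure Θ) A ∂(segMeasure μ σ)
        ≤ ∫⁻ _ in B, 1 ∂(segMeasure μ σ) := lintegral_mono fun ν => prob_le_one
      _ = segMeasure μ σ B := by simp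
      _ ≤ 1 := prob_le_one
  have := (ENNReal.toReal_eq_toReal_iff' f1 f2).mp key
  rw [this]
  rfl

end Core

set_option linter.unusedSectionVars false

section Key
variable (M : MeetingFunction)

/-- monotone measurable version of m for composition -/
def mm (M : MeetingFunction) : ℝ → ℝ := fun t => M.m (max t 0)

lemma mm_mono : Monotone (mm M) := fun a b hab =>
  M.mono.monotoneOn (mem_Ici.mpr (le_max_right a 0)) (mem_Ici.mpr (le_max_right b 0))
    (max_le_max hab le_rfl)

lemma mm_measurable : Measurable (mm M) := (mm_mono M).measurable

lemma mm_eq {t : ℝ} (ht : 0 ≤ t) : mm M t = M.m t := by rw [mm, max_eq_left ht]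

theorem key (k : ℝ) (hk : 0 < k)
    (μ : Measure Θ) [IsProbabilityMeasure μ]
    (σ : Kernel Θ PM) (hσ : σ ∈ Seg μ)
    (τ : PM → ℝ) (hτ0 : ∀ ν, 0 ≤ τ ν) (hτint : Integrable τ (segMeasure μ σ))
    (hτfeas : k * ∫ ν, τ ν ∂(segMeasure μ σ) = 1) :
    ∃ τt : Θ → ℝ, (∀ θ, 0 ≤ τt θ) ∧ Integrable τt μ ∧ k * ∫ θ, τt θ ∂μ = 1 ∧
      k * ∫ ν, M.m (τ ν) * Eθ ν ∂(segMeasure μ σ) ≤ k * ∫ θ, M.m (τt θ) * (θ : ℝ) ∂μ := by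
  haveI : IsMarkovKernel σ := hσ.1
  have hBC : BayesConsistent μ σ := hσ.2
  set ρ := segMeasure μ σ with hρ
  -- τ composed with snd is integrable on μ ⊗ₘ σ
  have hρsnd : ρ = (μ ⊗ₘ σ).snd := segMeasure_eq_snd μ σ
  have hτsnd : Integrable (fun p : Θ × PM => τ p.2) (μ ⊗ₘ σ) := by
    rw [hρsnd, Measure.snd] at hτint
    exact (integrable_map_measure hτint.aestronglyMeasurable
      measurable_snd.aemeasurable).mp hτint
  have hae_int : ∀ᵐ θ ∂μ, Integrable τ (σ θ) := by
    have := (Measure.integrable_compProd_iff hτsnd.aestronglyMeasurable).mp hτsnd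
    exact this.1
  -- definition of τt
  set τt : Θ → ℝ := fun θ => ∫ ν, τ ν ∂(σ θ) with hτt
  have hτt0 : ∀ θ, 0 ≤ τt θ := fun θ => integral_nonneg fun ν => hτ0 ν
  have hτtint : Integrable τt μ := by
    have h := hτsnd
    rw [Measure.compProd] at h
    have := MeasureTheory.Integrable.integral_compProd h
    simpa using this
  have hint_eq : ∫ θ, τt θ ∂μ = ∫ ν, τ ν ∂ρ := by
    have h1 : ∫ ν, τ ν ∂ρ = ∫ p : Θ × PM, τ p.2 ∂(μ ⊗ₘ σ) := by
      rw [hρsnd, Measure.snd, integral_map measurable_snd.aemeasurable]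
      rw [hρsnd, Measure.snd] at hτint
      exact hτint.aestronglyMeasurable
    rw [h1, Measure.integral_compProd hτsnd]
  -- the surplus inequality
  set g : PM → ℝ := fun ν => M.m (τ ν) with hgdef
  have hgAESM : AEStronglyMeasurable g ρ := by
    have hge : g = (mm M) ∘ τ := funext fun ν => (mm_eq M (hτ0 ν)).symm
    rw [hge]
    exact ((mm_measurable M).comp_aemeasurable hτint.aemeasurable).aestronglyMeasurable
  have hg0 : ∀ ν, 0 ≤ g ν := fun ν => M.m_nonneg (hτ0 ν)
  have hg1 : ∀ ν, g ν ≤ 1 := fun ν => M.m_le_one (hτ0 ν)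
  set H : PM × Θ → ℝ := fun p => g p.1 * (p.2 : ℝ) with hHdef
  have hκ₂ : (μ ⊗ₘ σ).map Prod.swap = ρ ⊗ₘ κν := swap_push μ σ hBC
  have hfst : (ρ ⊗ₘ κν).fst = ρ := Measure.fst_compProd ρ κν
  have hHaesm : AEStronglyMeasurable H (ρ ⊗ₘ κν) := by
    have h1 : AEStronglyMeasurable (fun p : PM × Θ => g p.1) (ρ ⊗ₘ κν) := by
      have h2 := hgAESM
      rw [← hfst, Measure.fst] at h2
      exact h2.comp_measurable measurable_fst
    exact h1.mul ((continuous_subtype_val.measurable.comp measurable_snd).aestronglyMeasurable)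
  have hθbd : ∀ θ : Θ, ‖(θ:ℝ)‖ ≤ 1 := fun θ => by
    rw [Real.norm_eq_abs, abs_of_nonneg θ.2.1]; exact θ.2.2
  have hHbd : ∀ p : PM × Θ, ‖H p‖ ≤ 1 := fun p => by
    rw [hHdef, norm_mul]
    calc ‖g p.1‖ * ‖(p.2:ℝ)‖ ≤ 1 * 1 := by
          refine mul_le_mul ?_ (hθbd p.2) (norm_nonneg _) zero_le_one
          rw [Real.norm_eq_abs, abs_of_nonneg (hg0 p.1)]; exact hg1 p.1
      _ = 1 := mul_one 1
  have hHint : Integrable H (ρ ⊗ₘ κν) :=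
    Integrable.mono' (integrable_const 1) hHaesm (Eventually.of_forall hHbd)
  have stepA : ∫ ν, M.m (τ ν) * Eθ ν ∂ρ = ∫ p, H p ∂(ρ ⊗ₘ κν) := by
    rw [Measure.integral_compProd hHint]
    refine integral_congr_ae (Eventually.of_forall fun ν => ?_)
    show M.m (τ ν) * Eθ ν = ∫ θ : Θ, g ν * (θ:ℝ) ∂(κν ν)
    rw [integral_const_mul]
    rfl
  have hHswap : AEStronglyMeasurable H ((μ ⊗ₘ σ).map Prod.swap) := by rw [hκ₂]; exact hHaesm
  have hHintswap : Integrable H ((μ ⊗ₘ σ).map Prod.swap) := by rw [hκ₂]; exact hHint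
  have hswapint : Integrable (fun p : Θ × PM => H (Prod.swap p)) (μ ⊗ₘ σ) :=
    (integrable_map_measure hHswap measurable_swap.aemeasurable).mp hHintswap
  have stepB : ∫ p, H p ∂(ρ ⊗ₘ κν) = ∫ p : Θ × PM, H (Prod.swap p) ∂(μ ⊗ₘ σ) := by
    rw [← hκ₂, integral_map measurable_swap.aemeasurable hHswap]
  have stepC : ∫ p : Θ × PM, H (Prod.swap p) ∂(μ ⊗ₘ σ)
      = ∫ θ : Θ, (∫ ν, g ν ∂(σ θ)) * (θ:ℝ) ∂μ := by
    rw [Measure.integral_compProd hswapint]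
    refine integral_congr_ae (Eventually.of_forall fun θ => ?_)
    show ∫ ν, g ν * (θ:ℝ) ∂(σ θ) = (∫ ν, g ν ∂(σ θ)) * (θ:ℝ)
    rw [integral_mul_const]
  -- a.e. integrability of g over σ θ
  have hgsnd : Integrable (fun p : Θ × PM => g p.2) (μ ⊗ₘ σ) := by
    have haesm : AEStronglyMeasurable (fun p : Θ × PM => g p.2) (μ ⊗ₘ σ) := by
      have h2 := hgAESM
      rw [hρsnd, Measure.snd] at h2
      exact h2.comp_measurable measurable_snd
    refine Integrable.mono' (integrable_const 1) haesm (Eventually.of_forall fun p => ?_)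
    rw [Real.norm_eq_abs, abs_of_nonneg (hg0 p.2)]; exact hg1 p.2
  have hae_mint : ∀ᵐ θ ∂μ, Integrable g (σ θ) :=
    ((Measure.integrable_compProd_iff hgsnd.aestronglyMeasurable).mp hgsnd).1
  -- Jensen
  have jensen : ∀ᵐ θ ∂μ, (∫ ν, g ν ∂(σ θ)) * (θ:ℝ) ≤ M.m (τt θ) * (θ:ℝ) := by
    filter_upwards [hae_int, hae_mint] with θ h1 h2
    have hj : ∫ ν, g ν ∂(σ θ) ≤ M.m (τt θ) :=
      M.m_concaveOn.le_map_integral M.m_contOn isClosed_Ici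
        (Eventually.of_forall fun ν => mem_Ici.mpr (hτ0 ν)) h1 h2
    exact mul_le_mul_of_nonneg_right hj θ.2.1
  -- integrability of the two integrands
  have hτtAESM : AEStronglyMeasurable τt μ := hτtint.aestronglyMeasurable
  have hRaesm : AEStronglyMeasurable (fun θ : Θ => M.m (τt θ) * (θ:ℝ)) μ := by
    have h1 : AEStronglyMeasurable (fun θ => M.m (τt θ)) μ := by
      have hge : (fun θ => M.m (τt θ)) = (mm M) ∘ τt :=
        funext fun θ => (mm_eq M (hτt0 θ)).symm
      rw [hge]
      exact ((mm_measurable M).comp_aemeasurable hτtint.aemeasurable).aestronglyMeasurable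
    exact h1.mul continuous_subtype_val.measurable.aestronglyMeasurable
  have hRint : Integrable (fun θ : Θ => M.m (τt θ) * (θ:ℝ)) μ := by
    refine Integrable.mono' (integrable_const 1) hRaesm (Eventually.of_forall fun θ => ?_)
    rw [norm_mul]
    calc ‖M.m (τt θ)‖ * ‖(θ:ℝ)‖ ≤ 1 * 1 := by
          refine mul_le_mul ?_ (hθbd θ) (norm_nonneg _) zero_le_one
          rw [Real.norm_eq_abs, abs_of_nonneg (M.m_nonneg (hτt0 θ))]
          exact M.m_le_one (hτt0 θ)
      _ = 1 := mul_one 1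
  have hLint : Integrable (fun θ : Θ => (∫ ν, g ν ∂(σ θ)) * (θ:ℝ)) μ := by
    have h := hswapint
    rw [Measure.compProd] at h
    have h2 := MeasureTheory.Integrable.integral_compProd h
    have h3 : Integrable (fun x : Θ => ∫ y : PM, H (y, x) ∂(σ x)) μ := by simpa using h2
    have e2 : (fun x : Θ => ∫ y : PM, H (y, x) ∂(σ x))
        = fun θ : Θ => (∫ ν, g ν ∂(σ θ)) * (θ:ℝ) := by
      funext θ
      show ∫ ν, g ν * (θ:ℝ) ∂(σ θ) = _
      rw [integral_mul_const]
    rwa [e2] at h3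
  have stepD : ∫ θ : Θ, (∫ ν, g ν ∂(σ θ)) * (θ:ℝ) ∂μ ≤ ∫ θ : Θ, M.m (τt θ) * (θ:ℝ) ∂μ :=
    integral_mono_ae hLint hRint jensen
  refine ⟨τt, hτt0, hτtint, by rw [hint_eq]; exact hτfeas, ?_⟩
  refine mul_le_mul_of_nonneg_left ?_ hk.le
  calc ∫ ν, M.m (τ ν) * Eθ ν ∂ρ = ∫ p, H p ∂(ρ ⊗ₘ κν) := stepA
    _ = ∫ p : Θ × PM, H (Prod.swap p) ∂(μ ⊗ₘ σ) := stepB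
    _ = ∫ θ : Θ, (∫ ν, g ν ∂(σ θ)) * (θ:ℝ) ∂μ := stepC
    _ ≤ ∫ θ : Θ, M.m (τt θ) * (θ:ℝ) ∂μ := stepD

end Key

section Perfect

def diracPM : Θ → PM := fun θ => ⟨Measure.dirac θ, inferInstance⟩

lemma continuous_diracPM : Continuous diracPM := by
  rw [continuous_iff_continuousAt]
  intro θ
  show Tendsto diracPM (nhds θ) (nhds (diracPM θ))
  rw [ProbabilityMeasure.tendsto_iff_forall_integral_tendsto]
  intro f
  have : ∀ x : Θ, (∫ ω, f ω ∂(diracPM x : Measure Θ)) = f x := fun x =>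
    integral_dirac f x
  simp_rw [this]
  exact (f.continuous.tendsto θ)

lemma injective_diracPM : Function.Injective diracPM := by
  intro a b hab
  have h : (Measure.dirac a) {b} = (Measure.dirac b) {b} :=
    congrArg (fun ν : PM => (ν : Measure Θ) {b}) hab
  by_contra hne
  rw [Measure.dirac_apply' _ (measurableSet_singleton b),
    Measure.dirac_apply' _ (measurableSet_singleton b)] at h
  simp [indicator_apply, hne] at h

lemma memb_diracPM : MeasurableEmbedding diracPM :=
  (continuous_diracPM.isClosedEmbedding injective_diracPM).measurableEmbedding

def perfectSeg : Kernel Θ PM := Kernel.deterministic diracPM memb_diracPM.measurable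

instance : IsMarkovKernel perfectSeg := Kernel.isMarkovKernel_deterministic _

lemma segMeasure_perfect (μ : Measure Θ) :
    segMeasure μ perfectSeg = μ.map diracPM := by
  rw [segMeasure, ← Measure.bind_dirac_eq_map μ memb_diracPM.measurable]
  congr 1

lemma perfect_mem_Seg (μ : Measure Θ) [IsProbabilityMeasure μ] : perfectSeg ∈ Seg μ := by
  refine ⟨inferInstance, ?_⟩
  intro A hA B hB
  rw [segMeasure_perfect, memb_diracPM.setIntegral_map]
  have e1 : ∀ θ : Θ, ((perfectSeg θ) B).toReal = (diracPM ⁻¹' B).indicator (fun _ => (1:ℝ)) θ := by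
    intro θ
    rw [perfectSeg, Kernel.deterministic_apply, Measure.dirac_apply' _ hB]
    by_cases h : diracPM θ ∈ B <;> simp [indicator_apply, h]
  have e2 : ∀ θ : Θ, ((diracPM θ : Measure Θ) A).toReal = A.indicator (fun _ => (1:ℝ)) θ := by
    intro θ
    show ((Measure.dirac θ) A).toReal = _
    rw [Measure.dirac_apply' _ hA]
    by_cases h : θ ∈ A <;> simp [indicator_apply, h]
  simp_rw [e1, e2]
  rw [setIntegral_indicator (memb_diracPM.measurable hB),
    setIntegral_indicator hA]
  rw [setIntegral_const, setIntegral_const]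
  rw [inter_comm]

end Perfect

section Bounds

lemma integrable_coeΘ (ν : Measure Θ) [IsProbabilityMeasure ν] :
    Integrable (fun θ : Θ => (θ:ℝ)) ν := by
  refine Integrable.mono' (integrable_const 1)
    continuous_subtype_val.measurable.aestronglyMeasurable
    (Eventually.of_forall fun θ => ?_)
  rw [Real.norm_eq_abs, abs_of_nonneg θ.2.1]; exact θ.2.2

lemma Eθ_nonneg (ν : PM) : 0 ≤ Eθ ν := integral_nonneg fun θ => θ.2.1

lemma Eθ_le_one (ν : PM) : Eθ ν ≤ 1 := by
  have h := integral_mono (integrable_coeΘ (ν : Measure Θ)) (integrable_const 1)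
    (fun θ => θ.2.2)
  simpa [Eθ] using h

lemma surplus_bound (M : MeetingFunction) (k : ℝ) (hk : 0 < k)
    (μ : Measure Θ) [IsProbabilityMeasure μ]
    (σ' : Kernel Θ PM) (hσ' : σ' ∈ Seg μ)
    (τ : PM → ℝ) (hτ0 : ∀ ν, 0 ≤ τ ν) (hτint : Integrable τ (segMeasure μ σ'))
    (hτfeas : k * ∫ ν, τ ν ∂(segMeasure μ σ') = 1) :
    k * ∫ ν, M.m (τ ν) * Eθ ν ∂(segMeasure μ σ') ≤ 1 := by
  haveI : IsMarkovKernel σ' := hσ'.1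
  have hAESM : AEStronglyMeasurable (fun ν => M.m (τ ν) * Eθ ν) (segMeasure μ σ') := by
    have h1 : AEStronglyMeasurable (fun ν => M.m (τ ν)) (segMeasure μ σ') := by
      have hge : (fun ν => M.m (τ ν)) = (mm M) ∘ τ := funext fun ν => (mm_eq M (hτ0 ν)).symm
      rw [hge]
      exact ((mm_measurable M).comp_aemeasurable hτint.aemeasurable).aestronglyMeasurable
    exact h1.mul continuous_Eθ.measurable.aestronglyMeasurable
  have hIbound : ∀ ν, ‖M.m (τ ν) * Eθ ν‖ ≤ τ ν := fun ν => by
    rw [norm_mul, Real.norm_eq_abs, Real.norm_eq_abs, abs_of_nonneg (M.m_nonneg (hτ0 ν)),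
      abs_of_nonneg (Eθ_nonneg ν)]
    calc M.m (τ ν) * Eθ ν ≤ M.m (τ ν) * 1 :=
          mul_le_mul_of_nonneg_left (Eθ_le_one ν) (M.m_nonneg (hτ0 ν))
      _ = M.m (τ ν) := mul_one _
      _ ≤ τ ν := M.m_le_self (hτ0 ν)
  have hint : Integrable (fun ν => M.m (τ ν) * Eθ ν) (segMeasure μ σ') :=
    Integrable.mono' hτint hAESM (Eventually.of_forall hIbound)
  have h1 : ∫ ν, M.m (τ ν) * Eθ ν ∂(segMeasure μ σ') ≤ ∫ ν, τ ν ∂(segMeasure μ σ') :=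
    integral_mono hint hτint fun ν => (le_abs_self _).trans ((Real.norm_eq_abs _) ▸ hIbound ν)
  calc k * ∫ ν, M.m (τ ν) * Eθ ν ∂(segMeasure μ σ')
      ≤ k * ∫ ν, τ ν ∂(segMeasure μ σ') := mul_le_mul_of_nonneg_left h1 hk.le
    _ = 1 := hτfeas

end Bounds


/-- For any segmentation `σ` and any feasible tightness `τ`, there is a feasible
tightness `τ̃` for the perfect segmentation (submarkets indexed by seller types `θ`, distributed
according to `μ`) yielding weakly higher total surplus; consequently the supremum of total surplus
over all segmentations and feasible tightness functions is attained by the perfect segmentation. -/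
theorem stmt3 (M : MeetingFunction) (k : ℝ) (hk : 0 < k)
    (μ : Measure Θ) [IsProbabilityMeasure μ] (hac : μ ≪ (volume : Measure Θ))
    (σ : Kernel Θ PM) (hσ : σ ∈ Seg μ) :
    (∀ τ : PM → ℝ, (∀ ν, 0 ≤ τ ν) → Integrable τ (segMeasure μ σ) →
        k * ∫ ν, τ ν ∂(segMeasure μ σ) = 1 →
        ∃ τt : Θ → ℝ, (∀ θ, 0 ≤ τt θ) ∧ Integrable τt μ ∧ k * ∫ θ, τt θ ∂μ = 1 ∧
          k * ∫ ν, M.m (τ ν) * Eθ ν ∂(segMeasure μ σ) ≤ k * ∫ θ, M.m (τt θ) * (θ : ℝ) ∂μ) ∧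
    sSup {s : ℝ | ∃ σ' ∈ Seg μ, ∃ τ : PM → ℝ, (∀ ν, 0 ≤ τ ν) ∧
          Integrable τ (segMeasure μ σ') ∧ k * ∫ ν, τ ν ∂(segMeasure μ σ') = 1 ∧
          s = k * ∫ ν, M.m (τ ν) * Eθ ν ∂(segMeasure μ σ')} =
      sSup {s : ℝ | ∃ τt : Θ → ℝ, (∀ θ, 0 ≤ τt θ) ∧ Integrable τt μ ∧
          k * ∫ θ, τt θ ∂μ = 1 ∧ s = k * ∫ θ, M.m (τt θ) * (θ : ℝ) ∂μ} := by
  constructor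
  · exact fun τ hτ0 hτint hτfeas => key M k hk μ σ hσ τ hτ0 hτint hτfeas
  · set S1 := {s : ℝ | ∃ σ' ∈ Seg μ, ∃ τ : PM → ℝ, (∀ ν, 0 ≤ τ ν) ∧
          Integrable τ (segMeasure μ σ') ∧ k * ∫ ν, τ ν ∂(segMeasure μ σ') = 1 ∧
          s = k * ∫ ν, M.m (τ ν) * Eθ ν ∂(segMeasure μ σ')} with hS1
    set S2 := {s : ℝ | ∃ τt : Θ → ℝ, (∀ θ, 0 ≤ τt θ) ∧ Integrable τt μ ∧
          k * ∫ θ, τt θ ∂μ = 1 ∧ s = k * ∫ θ, M.m (τt θ) * (θ : ℝ) ∂μ} with hS2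
    -- S2 ⊆ S1 via the perfect segmentation
    have hsub : S2 ⊆ S1 := by
      rintro s ⟨τt, h0, hint, hfeas, rfl⟩
      set τ : PM → ℝ := fun ν => ∫ θ, τt θ ∂(ν : Measure Θ) with hτdef
      have comp_eq : τ ∘ diracPM = τt := funext fun θ => integral_dirac _ _
      refine ⟨perfectSeg, perfect_mem_Seg μ, τ,
        fun ν => integral_nonneg (fun θ => h0 θ), ?_, ?_, ?_⟩
      · rw [segMeasure_perfect, memb_diracPM.integrable_map_iff, comp_eq]
        exact hint
      · rw [segMeasure_perfect, memb_diracPM.integral_map]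
        have : (fun θ => τ (diracPM θ)) = τt := comp_eq
        rw [this]
        exact hfeas
      · rw [segMeasure_perfect, memb_diracPM.integral_map]
        refine congrArg (k * ·) (integral_congr_ae (Eventually.of_forall fun θ => ?_))
        have e1 : τ (diracPM θ) = τt θ := congrFun comp_eq θ
        have e2 : Eθ (diracPM θ) = (θ : ℝ) := integral_dirac _ _
        show M.m (τt θ) * (θ:ℝ) = M.m (τ (diracPM θ)) * Eθ (diracPM θ)
        rw [e1, e2]
    -- S2 is nonempty
    have hS2ne : S2.Nonempty := by
      refine ⟨k * ∫ θ : Θ, M.m ((1:ℝ)/k) * (θ:ℝ) ∂μ, fun _ => 1/k,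
        fun _ => by positivity, integrable_const _, ?_, rfl⟩
      rw [integral_const]
      simp only [measure_univ, probReal_univ, ENNReal.toReal_one, smul_eq_mul, one_mul]
      rw [mul_one_div, div_self (ne_of_gt hk)]
    have hS1ne : S1.Nonempty := hS2ne.mono hsub
    have hbdd1 : BddAbove S1 := by
      refine ⟨1, ?_⟩
      rintro s ⟨σ', hσ', τ, h0, hint, hfeas, rfl⟩
      exact surplus_bound M k hk μ σ' hσ' τ h0 hint hfeas
    have hbdd2 : BddAbove S2 := hbdd1.mono hsub
    refine le_antisymm ?_ (csSup_le_csSup hbdd1 hS2ne hsub)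
    refine csSup_le hS1ne ?_
    rintro s ⟨σ', hσ', τ, h0, hint, hfeas, rfl⟩
    obtain ⟨τt, ht0, htint, htfeas, hle⟩ := key M k hk μ σ' hσ' τ h0 hint hfeas
    exact hle.trans (le_csSup hbdd2 ⟨τt, ht0, htint, htfeas, rfl⟩)
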